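/- Let q be a prime power, J ⊆ Φ⁺ closed, and A ∈ V_J. Then |O_A^r| = |O_A^l|, and the numbers of right and of left U_J-orbits contained in O_A^bi coincide. Moreover there exists κ ∈ ℕ such that ℂO_A^bi ≅ ℂO_A^r ⊕ ⋯ ⊕ ℂO_A^r (κ copies) as right ℂU_J-modules, and one has |O_A^bi| = |O_A^r|·|O_A^l| / |O_A^r ∩ O_A^l| = |O_A^r|² / |O_A^r ∩ O_A^l| and κ = |O_A^r| / |O_A^r ∩ O_A^l|. -/

import Mathlib

/-!
The right orbit of `A` is `A + π_J(A V_Jᵀ)` and the left orbit is `A + π_J(V_Jᵀ A)`. The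
two linear maps `X ↦ π_J(A Xᵀ)` and `X ↦ π_J(Xᵀ A)` of `V_J` are adjoint for the nondegenerate
pairing `(X, Y) ↦ tr(X Yᵀ)`, so they have the same rank and `|O_A^r| = |O_A^l|`.

The left and right actions commute, so left translation by `u` maps right orbits bijectively
onto right orbits, and the right orbits inside `O_A^bi` are exactly the translates `u.O_A^r`.
Each of them has `|O_A^r|` elements, meets `O_A^l = u.O_A^l` in `|O_A^r ∩ O_A^l|` points, and
affords the same character as `O_A^r`, because the diagonal coefficient `θ(B*(g⁻¹ − E))` at a
`g`-fixed `[B]` is unchanged by left translation. Summing over the `κ` right orbits in `O_A^bi`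
gives `|O_A^bi| = κ |O_A^r|`, `|O_A^l| = κ |O_A^r ∩ O_A^l|` and `χ_bi = κ χ_r`; the mirror
count `|O_A^bi| = κ' |O_A^l|` with `|O_A^l| = |O_A^r|` gives `κ' = κ`.
-/

open Matrix
open scoped Classical

noncomputable section

variable {F : Type} [Field F] [Fintype F] {n : ℕ}

/-- The pattern subgroup U_J ⊆ U_n(q): unitriangular matrices supported (off the diagonal)
on J. -/
def patternU (J : Set (Fin n × Fin n)) : Set (Matrix (Fin n) (Fin n) F) :=
  {u | (∀ i, u i i = 1) ∧ ∀ i j, i ≠ j → (i, j) ∉ J → u i j = 0}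

/-- V_J = {A ∈ M_n(q) : A_{ij} = 0 unless (i,j) ∈ J}. -/
def patternV (J : Set (Fin n × Fin n)) : Set (Matrix (Fin n) (Fin n) F) :=
  {A | ∀ i j, (i, j) ∉ J → A i j = 0}

/-- The natural projection π_J : M_n(q) → V_J. -/
def projJ (J : Set (Fin n × Fin n)) (B : Matrix (Fin n) (Fin n) F) :
    Matrix (Fin n) (Fin n) F :=
  Matrix.of fun i j => if (i, j) ∈ J then B i j else 0

/-- The pairing A*(B) = Σ_{i,j} A_{ij} B_{ij}; for A supported on J this is the linear
form A* = Σ_{(i,j)∈J} A_{ij} ε_{ij} evaluated at B. -/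
def dpair (A B : Matrix (Fin n) (Fin n) F) : F :=
  ∑ i, ∑ j, A i j * B i j

/-- The right orbit O_A^r = [A].U_J on the level of matrices: [A].u = [π_J(A u^{−t})]. -/
def orbR (J : Set (Fin n × Fin n)) (A : Matrix (Fin n) (Fin n) F) :
    Set (Matrix (Fin n) (Fin n) F) :=
  {B | ∃ u ∈ patternU J, B = projJ J (A * (u⁻¹)ᵀ)}

/-- The left orbit O_A^l = U_J.[A] on the level of matrices: u.[A] = [π_J(u^{−t} A)]. -/
def orbL (J : Set (Fin n × Fin n)) (A : Matrix (Fin n) (Fin n) F) :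
    Set (Matrix (Fin n) (Fin n) F) :=
  {B | ∃ u ∈ patternU J, B = projJ J ((u⁻¹)ᵀ * A)}

/-- The biorbit O_A^bi = U_J.[A].U_J on the level of matrices. -/
def orbBi (J : Set (Fin n × Fin n)) (A : Matrix (Fin n) (Fin n) F) :
    Set (Matrix (Fin n) (Fin n) F) :=
  {B | ∃ u ∈ patternU J, ∃ v ∈ patternU J, B = projJ J ((u⁻¹)ᵀ * projJ J (A * (v⁻¹)ᵀ))}

/-- The character of U_J afforded by the monomial right orbit module ℂO_A^r (with respect to
the nontrivial character θ of (𝔽_q,+)): the trace of g on the monomial basis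
{[B] : B ∈ O_A^r}, where [B]g = [B](g⁻¹ − E)·[B].g, so that the diagonal entry at [B] is
θ(B*(g⁻¹ − E)) if [B].g = [B] and 0 otherwise. -/
def rcharFn (J : Set (Fin n × Fin n)) (θ : AddChar F ℂ)
    (A g : Matrix (Fin n) (Fin n) F) : ℂ :=
  ∑ᶠ B ∈ orbR J A, if projJ J (B * (g⁻¹)ᵀ) = B then θ (dpair B (g⁻¹ - 1)) else 0

/-- The character of U_J afforded by the monomial left orbit module ℂO_A^l. -/
def lcharFn (J : Set (Fin n × Fin n)) (θ : AddChar F ℂ)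
    (A g : Matrix (Fin n) (Fin n) F) : ℂ :=
  ∑ᶠ B ∈ orbL J A, if projJ J ((g⁻¹)ᵀ * B) = B then θ (dpair B (g⁻¹ - 1)) else 0

/-- The character of U_J afforded by the biorbit span ℂO_A^bi regarded as a right
ℂU_J-module. -/
def bcharFn (J : Set (Fin n × Fin n)) (θ : AddChar F ℂ)
    (A g : Matrix (Fin n) (Fin n) F) : ℂ :=
  ∑ᶠ B ∈ orbBi J A, if projJ J (B * (g⁻¹)ᵀ) = B then θ (dpair B (g⁻¹ - 1)) else 0


theorem finsum_mem_eq_card_quot_smul {α M : Type*} [AddCommMonoid M] {S : Set α}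
    (hS : S.Finite) (O : α → Set α) (self_mem : ∀ a ∈ S, a ∈ O a)
    (eq_of_mem : ∀ a ∈ S, ∀ b ∈ O a, O b = O a) (subset : ∀ a ∈ S, O a ⊆ S)
    (f : α → M) (v : M) (hv : ∀ a ∈ S, ∑ᶠ b ∈ O a, f b = v) :
    ∑ᶠ b ∈ S, f b = Nat.card (Quot fun a b : S => (b : α) ∈ O a) • v := by
  classical
  have := hS.fintype
  set r : S → S → Prop := fun a b => (b : α) ∈ O a
  have hr : Equivalence r :=
    { refl := fun a => self_mem a a.2
      symm := fun {a b} hab => by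
        change (a : α) ∈ O b
        rw [eq_of_mem a a.2 b hab]
        exact self_mem a a.2
      trans := fun {a b c} hab hbc => by
        change (c : α) ∈ O a
        rwa [← eq_of_mem a a.2 b hab] }
  have fiber (a : S) : ∑ b : {b : S // Quot.mk r b = Quot.mk r a}, f b = v := by
    have hmk (b : S) : Quot.mk r b = Quot.mk r a ↔ (b : α) ∈ O a := by
      rw [Quot.eq, hr.eqvGen_iff]
      exact ⟨hr.symm, hr.symm⟩
    let e : {b : S // Quot.mk r b = Quot.mk r a} ≃ O a :=
      { toFun := fun b => ⟨b, (hmk b).1 b.2⟩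
        invFun := fun c => ⟨⟨c, subset a a.2 c.2⟩, (hmk _).2 c.2⟩
        left_inv := fun _ => rfl
        right_inv := fun _ => rfl }
    rw [← hv a a.2, ← finsum_eq_sum_of_fintype, ← finsum_set_coe_eq_finsum_mem,
      ← finsum_comp_equiv e]
    rfl
  have := Fintype.ofFinite (Quot r)
  rw [← finsum_set_coe_eq_finsum_mem, finsum_eq_sum_of_fintype,
    ← Fintype.sum_fiberwise (Quot.mk r), Nat.card_eq_fintype_card, ← Finset.card_univ,
    ← Finset.sum_const]
  refine Finset.sum_congr rfl fun q _ => ?_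
  obtain ⟨a, rfl⟩ := Quot.exists_rep q
  exact fiber a

theorem finsum_mem_indicator_one {α : Type*} (s t : Set α) :
    ∑ᶠ a ∈ s, t.indicator (1 : α → ℕ) a = (s ∩ t).ncard := by
  rw [finsum_mem_def, Set.indicator_indicator, ← finsum_mem_def]
  exact finsum_one

theorem LinearMap.BilinForm.finrank_range_eq_of_isAdjointPair {K V : Type*} [Field K]
    [AddCommGroup V] [Module K V] [FiniteDimensional K V] {B : LinearMap.BilinForm K V}
    (hB : B.Nondegenerate) {f g : V →ₗ[K] V} (h : LinearMap.IsAdjointPair B B f g) :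
    Module.finrank K (LinearMap.range f) = Module.finrank K (LinearMap.range g) := by
  let φ := B.flip.toDual hB.flip
  have hcomm : f.dualMap ∘ₗ φ.toLinearMap = φ.toLinearMap ∘ₗ g := by
    ext y x
    exact h x y
  calc Module.finrank K (LinearMap.range f)
      = Module.finrank K (LinearMap.range (f.dualMap ∘ₗ φ.toLinearMap)) := by
        rw [LinearMap.range_comp_of_range_eq_top _ φ.range,
          LinearMap.finrank_range_dualMap_eq_finrank_range]
    _ = Module.finrank K (LinearMap.range g) := by
        rw [hcomm, LinearMap.range_comp, LinearEquiv.finrank_map_eq]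

section PatternGroup

variable {F : Type} [Field F] {n : ℕ} {J : Set (Fin n × Fin n)}

theorem one_mem_patternU : (1 : Matrix (Fin n) (Fin n) F) ∈ patternU J :=
  ⟨fun _ => one_apply_eq _, fun _ _ hij _ => one_apply_ne hij⟩

theorem sub_one_mem_patternV {u : Matrix (Fin n) (Fin n) F} (hu : u ∈ patternU J) :
    u - 1 ∈ patternV J := by
  intro i j hij
  rcases eq_or_ne i j with rfl | hne
  · simp [hu.1 i]
  · simp [hu.2 i j hne hij, one_apply_ne hne]

theorem one_add_mem_patternU (hΦ : ∀ p ∈ J, p.1 < p.2) {N : Matrix (Fin n) (Fin n) F}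
    (hN : N ∈ patternV J) : 1 + N ∈ patternU J :=
  ⟨fun i => by simp [hN i i fun h => (hΦ _ h).false],
    fun i j hij h => by simp [one_apply_ne hij, hN i j h]⟩

theorem mul_mem_patternU (hΦ : ∀ p ∈ J, p.1 < p.2)
    (hcl : ∀ i j k : Fin n, (i, j) ∈ J → (j, k) ∈ J → (i, k) ∈ J)
    {u v : Matrix (Fin n) (Fin n) F} (hu : u ∈ patternU J) (hv : v ∈ patternU J) :
    u * v ∈ patternU J := by
  have term_eq_zero (i j k : Fin n) (hik : i ≠ k) (hkj : k ≠ j) (hij : (i, j) ∉ J) :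
      u i k * v k j = 0 := by
    by_cases h₁ : (i, k) ∈ J
    · rw [hv.2 k j hkj fun h₂ => hij (hcl i k j h₁ h₂), mul_zero]
    · rw [hu.2 i k hik h₁, zero_mul]
  have hii (i : Fin n) : (i, i) ∉ J := fun h => (hΦ _ h).false
  refine ⟨fun i => ?_, fun i j hij h => ?_⟩
  · rw [mul_apply, Finset.sum_eq_single i (fun k _ hk => term_eq_zero i i k hk.symm hk (hii i))
      (by simp), hu.1, hv.1, mul_one]
  · rw [mul_apply]
    refine Finset.sum_eq_zero fun k _ => ?_
    rcases eq_or_ne i k with rfl | hik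
    · rw [hv.2 i j hij h, mul_zero]
    rcases eq_or_ne k j with rfl | hkj
    · rw [hu.2 i k hij h, zero_mul]
    exact term_eq_zero i j k hik hkj h

def patternSubmonoid (hΦ : ∀ p ∈ J, p.1 < p.2)
    (hcl : ∀ i j k : Fin n, (i, j) ∈ J → (j, k) ∈ J → (i, k) ∈ J) :
    Submonoid (Matrix (Fin n) (Fin n) F) where
  carrier := patternU J
  mul_mem' := mul_mem_patternU hΦ hcl
  one_mem' := one_mem_patternU

theorem det_of_mem_patternU (hΦ : ∀ p ∈ J, p.1 < p.2) {u : Matrix (Fin n) (Fin n) F}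
    (hu : u ∈ patternU J) : u.det = 1 := by
  have upper : u.BlockTriangular id := fun i j hji =>
    hu.2 i j hji.ne' fun h => (hΦ _ h).not_gt hji
  simp [det_of_isUpperTriangular upper, hu.1]

theorem isUnit_det_of_mem_patternU (hΦ : ∀ p ∈ J, p.1 < p.2) {u : Matrix (Fin n) (Fin n) F}
    (hu : u ∈ patternU J) : IsUnit u.det := by
  rw [det_of_mem_patternU hΦ hu]
  exact isUnit_one

/-- In the finite group of invertible matrices, `u⁻¹` is a power of `u`. -/
theorem inv_mem_patternU [Fintype F] (hΦ : ∀ p ∈ J, p.1 < p.2)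
    (hcl : ∀ i j k : Fin n, (i, j) ∈ J → (j, k) ∈ J → (i, k) ∈ J)
    {u : Matrix (Fin n) (Fin n) F} (hu : u ∈ patternU J) : u⁻¹ ∈ patternU J := by
  obtain ⟨w, rfl⟩ := (isUnit_iff_isUnit_det u).2 (isUnit_det_of_mem_patternU hΦ hu)
  have hcard : 0 < Nat.card (Matrix (Fin n) (Fin n) F)ˣ := Nat.card_pos
  have hinv : (w : Matrix (Fin n) (Fin n) F)⁻¹ =
      w ^ (Nat.card (Matrix (Fin n) (Fin n) F)ˣ - 1) :=
    inv_eq_right_inv <| by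
      rw [← pow_succ', Nat.sub_add_cancel hcard, ← Units.val_pow_eq_pow_val, pow_card_eq_one',
        Units.val_one]
  rw [hinv]
  exact pow_mem (S := patternSubmonoid hΦ hcl) hu _

end PatternGroup

section Projection

variable {F : Type} [Field F] {n : ℕ} {J : Set (Fin n × Fin n)}

theorem projJ_mem_patternV (B : Matrix (Fin n) (Fin n) F) : projJ J B ∈ patternV J :=
  fun _ _ h => if_neg h

theorem projJ_of_mem_patternV {B : Matrix (Fin n) (Fin n) F} (hB : B ∈ patternV J) :
    projJ J B = B := by
  ext i j
  by_cases h : (i, j) ∈ J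
  · exact if_pos h
  · exact (if_neg h).trans (hB i j h).symm

theorem projJ_add (B C : Matrix (Fin n) (Fin n) F) :
    projJ J (B + C) = projJ J B + projJ J C := by
  ext i j
  simp only [projJ, of_apply, Matrix.add_apply]
  split_ifs <;> simp

theorem projJ_sub (B C : Matrix (Fin n) (Fin n) F) :
    projJ J (B - C) = projJ J B - projJ J C := by
  ext i j
  simp only [projJ, of_apply, Matrix.sub_apply]
  split_ifs <;> simp

theorem projJ_smul (c : F) (B : Matrix (Fin n) (Fin n) F) :
    projJ J (c • B) = c • projJ J B := by
  ext i j
  simp only [projJ, of_apply, Matrix.smul_apply, smul_ite, smul_zero]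

theorem projJ_projJ_mul_transpose
    (hcl : ∀ i j k : Fin n, (i, j) ∈ J → (j, k) ∈ J → (i, k) ∈ J)
    {w : Matrix (Fin n) (Fin n) F} (hw : w ∈ patternU J) (X : Matrix (Fin n) (Fin n) F) :
    projJ J (projJ J X * wᵀ) = projJ J (X * wᵀ) := by
  ext i j
  by_cases hij : (i, j) ∈ J
  · simp only [projJ, of_apply, hij, if_true, mul_apply, transpose_apply]
    refine Finset.sum_congr rfl fun k _ => ?_
    by_cases hik : (i, k) ∈ J
    · rw [if_pos hik]
    · have hjk : j ≠ k := by rintro rfl; exact hik hij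
      rw [if_neg hik, hw.2 j k hjk fun hjk' => hik (hcl i j k hij hjk'), zero_mul, mul_zero]
  · simp [projJ, hij]

theorem projJ_transpose_mul_projJ
    (hcl : ∀ i j k : Fin n, (i, j) ∈ J → (j, k) ∈ J → (i, k) ∈ J)
    {w : Matrix (Fin n) (Fin n) F} (hw : w ∈ patternU J) (X : Matrix (Fin n) (Fin n) F) :
    projJ J (wᵀ * projJ J X) = projJ J (wᵀ * X) := by
  ext i j
  by_cases hij : (i, j) ∈ J
  · simp only [projJ, of_apply, hij, if_true, mul_apply, transpose_apply]
    refine Finset.sum_congr rfl fun k _ => ?_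
    by_cases hkj : (k, j) ∈ J
    · rw [if_pos hkj]
    · have hki : k ≠ i := by rintro rfl; exact hkj hij
      rw [if_neg hkj, hw.2 k i hki fun hki' => hkj (hcl k i j hki' hij), zero_mul, zero_mul]
  · simp [projJ, hij]

def actR (J : Set (Fin n × Fin n)) (u B : Matrix (Fin n) (Fin n) F) :
    Matrix (Fin n) (Fin n) F :=
  projJ J (B * (u⁻¹)ᵀ)

def actL (J : Set (Fin n × Fin n)) (u B : Matrix (Fin n) (Fin n) F) :
    Matrix (Fin n) (Fin n) F :=
  projJ J ((u⁻¹)ᵀ * B)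

theorem actR_one {B : Matrix (Fin n) (Fin n) F} (hB : B ∈ patternV J) : actR J 1 B = B := by
  rw [actR, inv_one, transpose_one, Matrix.mul_one, projJ_of_mem_patternV hB]

theorem actL_one {B : Matrix (Fin n) (Fin n) F} (hB : B ∈ patternV J) : actL J 1 B = B := by
  rw [actL, inv_one, transpose_one, Matrix.one_mul, projJ_of_mem_patternV hB]

theorem mem_orbR_self {B : Matrix (Fin n) (Fin n) F} (hB : B ∈ patternV J) : B ∈ orbR J B :=
  ⟨1, one_mem_patternU, (actR_one hB).symm⟩

theorem mem_orbL_self {B : Matrix (Fin n) (Fin n) F} (hB : B ∈ patternV J) : B ∈ orbL J B :=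
  ⟨1, one_mem_patternU, (actL_one hB).symm⟩

theorem mem_orbBi_self {A : Matrix (Fin n) (Fin n) F} (hA : A ∈ patternV J) :
    A ∈ orbBi J A := by
  refine ⟨1, one_mem_patternU, 1, one_mem_patternU, ?_⟩
  change A = actL J 1 (actR J 1 A)
  rw [actR_one hA, actL_one hA]

theorem orbR_subset_patternV (B : Matrix (Fin n) (Fin n) F) : orbR J B ⊆ patternV J := by
  rintro _ ⟨_, -, rfl⟩
  exact projJ_mem_patternV _

theorem orbL_subset_patternV (B : Matrix (Fin n) (Fin n) F) : orbL J B ⊆ patternV J := by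
  rintro _ ⟨_, -, rfl⟩
  exact projJ_mem_patternV _

theorem orbBi_subset_patternV (A : Matrix (Fin n) (Fin n) F) : orbBi J A ⊆ patternV J := by
  rintro _ ⟨_, -, _, -, rfl⟩
  exact projJ_mem_patternV _

end Projection

section Actions

variable {F : Type} [Field F] [Fintype F] {n : ℕ} {J : Set (Fin n × Fin n)}
  (hΦ : ∀ p ∈ J, p.1 < p.2)
  (hcl : ∀ i j k : Fin n, (i, j) ∈ J → (j, k) ∈ J → (i, k) ∈ J)
include hΦ hcl

theorem actR_actR {u : Matrix (Fin n) (Fin n) F} (hu : u ∈ patternU J)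
    (v B : Matrix (Fin n) (Fin n) F) : actR J u (actR J v B) = actR J (v * u) B := by
  rw [actR, actR, actR, projJ_projJ_mul_transpose hcl (inv_mem_patternU hΦ hcl hu),
    Matrix.mul_inv_rev, transpose_mul, Matrix.mul_assoc]

theorem actL_actL {u : Matrix (Fin n) (Fin n) F} (hu : u ∈ patternU J)
    (v B : Matrix (Fin n) (Fin n) F) : actL J u (actL J v B) = actL J (u * v) B := by
  rw [actL, actL, actL, projJ_transpose_mul_projJ hcl (inv_mem_patternU hΦ hcl hu),
    Matrix.mul_inv_rev, transpose_mul, Matrix.mul_assoc]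

theorem actL_actR_comm {u v : Matrix (Fin n) (Fin n) F} (hu : u ∈ patternU J)
    (hv : v ∈ patternU J) (B : Matrix (Fin n) (Fin n) F) :
    actL J u (actR J v B) = actR J v (actL J u B) := by
  rw [actL, actR, projJ_transpose_mul_projJ hcl (inv_mem_patternU hΦ hcl hu), actR, actL,
    projJ_projJ_mul_transpose hcl (inv_mem_patternU hΦ hcl hv), Matrix.mul_assoc]

theorem actR_inv_actR {u : Matrix (Fin n) (Fin n) F} (hu : u ∈ patternU J)
    {B : Matrix (Fin n) (Fin n) F} (hB : B ∈ patternV J) : actR J u⁻¹ (actR J u B) = B := by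
  rw [actR_actR hΦ hcl (inv_mem_patternU hΦ hcl hu),
    mul_nonsing_inv u (isUnit_det_of_mem_patternU hΦ hu), actR_one hB]

theorem actL_inv_actL {u : Matrix (Fin n) (Fin n) F} (hu : u ∈ patternU J)
    {B : Matrix (Fin n) (Fin n) F} (hB : B ∈ patternV J) : actL J u⁻¹ (actL J u B) = B := by
  rw [actL_actL hΦ hcl (inv_mem_patternU hΦ hcl hu),
    nonsing_inv_mul u (isUnit_det_of_mem_patternU hΦ hu), actL_one hB]

theorem actR_injOn {u : Matrix (Fin n) (Fin n) F} (hu : u ∈ patternU J) :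
    Set.InjOn (actR J u) (patternV J) := fun B hB C hC h => by
  rw [← actR_inv_actR hΦ hcl hu hB, h, actR_inv_actR hΦ hcl hu hC]

theorem actL_injOn {u : Matrix (Fin n) (Fin n) F} (hu : u ∈ patternU J) :
    Set.InjOn (actL J u) (patternV J) := fun B hB C hC h => by
  rw [← actL_inv_actL hΦ hcl hu hB, h, actL_inv_actL hΦ hcl hu hC]

theorem orbR_actR {v : Matrix (Fin n) (Fin n) F} (hv : v ∈ patternU J)
    {B : Matrix (Fin n) (Fin n) F} (hB : B ∈ patternV J) : orbR J (actR J v B) = orbR J B := by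
  ext C
  constructor
  · rintro ⟨w, hw, rfl⟩
    exact ⟨v * w, mul_mem_patternU hΦ hcl hv hw, actR_actR hΦ hcl hw v B⟩
  · rintro ⟨w, hw, rfl⟩
    refine ⟨v⁻¹ * w, mul_mem_patternU hΦ hcl (inv_mem_patternU hΦ hcl hv) hw, ?_⟩
    change actR J w B = actR J (v⁻¹ * w) (actR J v B)
    rw [← actR_actR hΦ hcl hw, actR_inv_actR hΦ hcl hv hB]

theorem orbL_actL {u : Matrix (Fin n) (Fin n) F} (hu : u ∈ patternU J)
    {B : Matrix (Fin n) (Fin n) F} (hB : B ∈ patternV J) : orbL J (actL J u B) = orbL J B := by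
  ext C
  constructor
  · rintro ⟨w, hw, rfl⟩
    exact ⟨w * u, mul_mem_patternU hΦ hcl hw hu, actL_actL hΦ hcl hw u B⟩
  · rintro ⟨w, hw, rfl⟩
    refine ⟨w * u⁻¹, mul_mem_patternU hΦ hcl hw (inv_mem_patternU hΦ hcl hu), ?_⟩
    change actL J w B = actL J (w * u⁻¹) (actL J u B)
    rw [← actL_actL hΦ hcl hw, actL_inv_actL hΦ hcl hu hB]

theorem orbR_actL {u : Matrix (Fin n) (Fin n) F} (hu : u ∈ patternU J)
    (B : Matrix (Fin n) (Fin n) F) : orbR J (actL J u B) = actL J u '' orbR J B := by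
  ext C
  constructor
  · rintro ⟨w, hw, rfl⟩
    exact ⟨actR J w B, ⟨w, hw, rfl⟩, actL_actR_comm hΦ hcl hu hw B⟩
  · rintro ⟨_, ⟨w, hw, rfl⟩, rfl⟩
    exact ⟨w, hw, actL_actR_comm hΦ hcl hu hw B⟩

theorem orbL_actR {v : Matrix (Fin n) (Fin n) F} (hv : v ∈ patternU J)
    (B : Matrix (Fin n) (Fin n) F) : orbL J (actR J v B) = actR J v '' orbL J B := by
  ext C
  constructor
  · rintro ⟨w, hw, rfl⟩
    exact ⟨actL J w B, ⟨w, hw, rfl⟩, (actL_actR_comm hΦ hcl hw hv B).symm⟩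
  · rintro ⟨_, ⟨w, hw, rfl⟩, rfl⟩
    exact ⟨w, hw, (actL_actR_comm hΦ hcl hw hv B).symm⟩

theorem orbR_subset_orbBi {A B : Matrix (Fin n) (Fin n) F} (hB : B ∈ orbBi J A) :
    orbR J B ⊆ orbBi J A := by
  obtain ⟨u, hu, v, hv, rfl⟩ := hB
  rintro _ ⟨w, hw, rfl⟩
  refine ⟨u, hu, v * w, mul_mem_patternU hΦ hcl hv hw, ?_⟩
  change actR J w (actL J u (actR J v A)) = actL J u (actR J (v * w) A)
  rw [← actL_actR_comm hΦ hcl hu hw, actR_actR hΦ hcl hw]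

theorem orbL_subset_orbBi {A B : Matrix (Fin n) (Fin n) F} (hB : B ∈ orbBi J A) :
    orbL J B ⊆ orbBi J A := by
  obtain ⟨u, hu, v, hv, rfl⟩ := hB
  rintro _ ⟨w, hw, rfl⟩
  exact ⟨w * u, mul_mem_patternU hΦ hcl hw hu, v, hv, actL_actL hΦ hcl hw u _⟩

theorem actL_image_orbL {u : Matrix (Fin n) (Fin n) F} (hu : u ∈ patternU J)
    (B : Matrix (Fin n) (Fin n) F) : actL J u '' orbL J B = orbL J B := by
  ext C
  constructor
  · rintro ⟨_, ⟨w, hw, rfl⟩, rfl⟩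
    exact ⟨u * w, mul_mem_patternU hΦ hcl hu hw, actL_actL hΦ hcl hu w B⟩
  · rintro ⟨w, hw, rfl⟩
    refine ⟨actL J (u⁻¹ * w) B,
      ⟨_, mul_mem_patternU hΦ hcl (inv_mem_patternU hΦ hcl hu) hw, rfl⟩, ?_⟩
    rw [actL_actL hΦ hcl hu, ← Matrix.mul_assoc,
      mul_nonsing_inv u (isUnit_det_of_mem_patternU hΦ hu), Matrix.one_mul]
    rfl

end Actions


section Pairing

variable {F : Type} [Field F] {n : ℕ}

theorem dpair_eq_trace (X Y : Matrix (Fin n) (Fin n) F) : dpair X Y = trace (X * Yᵀ) := by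
  simp [dpair, trace, mul_apply]

theorem dpair_comm (X Y : Matrix (Fin n) (Fin n) F) : dpair X Y = dpair Y X := by
  simp only [dpair, mul_comm]

theorem dpair_add_left (X X' Y : Matrix (Fin n) (Fin n) F) :
    dpair (X + X') Y = dpair X Y + dpair X' Y := by
  simp only [dpair_eq_trace, Matrix.add_mul, trace_add]

theorem dpair_zero_left (Y : Matrix (Fin n) (Fin n) F) : dpair 0 Y = 0 := by
  simp [dpair]

theorem dpair_mul_transpose (A X Y : Matrix (Fin n) (Fin n) F) :
    dpair (A * Xᵀ) Y = dpair X (Yᵀ * A) := by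
  rw [dpair_eq_trace, dpair_eq_trace, ← trace_transpose]
  simp only [transpose_mul, transpose_transpose, Matrix.mul_assoc]
  rw [trace_mul_comm, Matrix.mul_assoc]

theorem dpair_projJ (J : Set (Fin n × Fin n)) (X Y : Matrix (Fin n) (Fin n) F) :
    dpair (projJ J X) Y = dpair X (projJ J Y) := by
  simp only [dpair, projJ, of_apply, ite_mul, mul_ite, zero_mul, mul_zero]

theorem dpair_projJ_of_mem_patternV {J : Set (Fin n × Fin n)} {Y : Matrix (Fin n) (Fin n) F}
    (hY : Y ∈ patternV J) (X : Matrix (Fin n) (Fin n) F) : dpair (projJ J X) Y = dpair X Y := by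
  rw [dpair_projJ, projJ_of_mem_patternV hY]

def dpairForm : LinearMap.BilinForm F (Matrix (Fin n) (Fin n) F) :=
  LinearMap.mk₂ F dpair dpair_add_left
    (fun c X Y => by simp only [dpair_eq_trace, Matrix.smul_mul, trace_smul])
    (fun X Y Y' => by simp only [dpair_eq_trace, transpose_add, Matrix.mul_add, trace_add])
    (fun c X Y => by simp only [dpair_eq_trace, transpose_smul, Matrix.mul_smul, trace_smul])

theorem dpairForm_nondegenerate :
    (dpairForm : LinearMap.BilinForm F (Matrix (Fin n) (Fin n) F)).Nondegenerate := by
  have separating (X : Matrix (Fin n) (Fin n) F) (hX : ∀ Y, dpair X Y = 0) : X = 0 := by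
    ext i j
    simpa [dpair, single_apply, ite_and] using hX (single i j 1)
  exact ⟨fun X hX => separating X hX,
    fun Y hY => separating Y fun X => (dpair_comm Y X).trans (hY X)⟩

end Pairing

section OrbitSize

variable {F : Type} [Field F] {n : ℕ} (J : Set (Fin n × Fin n)) (A : Matrix (Fin n) (Fin n) F)

def orbRMap : Matrix (Fin n) (Fin n) F →ₗ[F] Matrix (Fin n) (Fin n) F where
  toFun X := projJ J (A * (projJ J X)ᵀ)
  map_add' X Y := by simp only [projJ_add, transpose_add, Matrix.mul_add]
  map_smul' c X := by simp only [projJ_smul, transpose_smul, Matrix.mul_smul, RingHom.id_apply]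

def orbLMap : Matrix (Fin n) (Fin n) F →ₗ[F] Matrix (Fin n) (Fin n) F where
  toFun X := projJ J ((projJ J X)ᵀ * A)
  map_add' X Y := by simp only [projJ_add, transpose_add, Matrix.add_mul]
  map_smul' c X := by simp only [projJ_smul, transpose_smul, Matrix.smul_mul, RingHom.id_apply]

theorem isAdjointPair_orbRMap_orbLMap :
    LinearMap.IsAdjointPair dpairForm dpairForm (orbRMap J A) (orbLMap J A) := fun X Y => by
  change dpair (projJ J (A * (projJ J X)ᵀ)) Y = dpair X (projJ J ((projJ J Y)ᵀ * A))
  rw [dpair_projJ, dpair_mul_transpose, ← dpair_projJ]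

variable {J A} [Fintype F] (hΦ : ∀ p ∈ J, p.1 < p.2)
  (hcl : ∀ i j k : Fin n, (i, j) ∈ J → (j, k) ∈ J → (i, k) ∈ J) (hA : A ∈ patternV J)
include hΦ hcl hA

theorem orbR_eq_range : orbR J A = Set.range fun X => A + orbRMap J A X := by
  have translate (w : Matrix (Fin n) (Fin n) F) :
      projJ J (A * wᵀ) = A + projJ J (A * (w - 1)ᵀ) := by
    rw [transpose_sub, transpose_one, Matrix.mul_sub, Matrix.mul_one,
      ← projJ_of_mem_patternV hA, ← projJ_add, projJ_of_mem_patternV hA, add_sub_cancel]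
  ext B
  constructor
  · rintro ⟨u, hu, rfl⟩
    refine ⟨u⁻¹ - 1, ?_⟩
    change A + projJ J (A * (projJ J (u⁻¹ - 1))ᵀ) = projJ J (A * (u⁻¹)ᵀ)
    rw [projJ_of_mem_patternV (sub_one_mem_patternV (inv_mem_patternU hΦ hcl hu)),
      translate u⁻¹]
  · rintro ⟨X, rfl⟩
    have hu := one_add_mem_patternU hΦ (projJ_mem_patternV (J := J) X)
    refine ⟨(1 + projJ J X)⁻¹, inv_mem_patternU hΦ hcl hu, ?_⟩
    change A + projJ J (A * (projJ J X)ᵀ) = projJ J (A * ((1 + projJ J X)⁻¹⁻¹)ᵀ)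
    rw [nonsing_inv_nonsing_inv _ (isUnit_det_of_mem_patternU hΦ hu),
      translate (1 + projJ J X), add_sub_cancel_left]

theorem orbL_eq_range : orbL J A = Set.range fun X => A + orbLMap J A X := by
  have translate (w : Matrix (Fin n) (Fin n) F) :
      projJ J (wᵀ * A) = A + projJ J ((w - 1)ᵀ * A) := by
    rw [transpose_sub, transpose_one, Matrix.sub_mul, Matrix.one_mul,
      ← projJ_of_mem_patternV hA, ← projJ_add, projJ_of_mem_patternV hA, add_sub_cancel]
  ext B
  constructor
  · rintro ⟨u, hu, rfl⟩
    refine ⟨u⁻¹ - 1, ?_⟩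
    change A + projJ J ((projJ J (u⁻¹ - 1))ᵀ * A) = projJ J ((u⁻¹)ᵀ * A)
    rw [projJ_of_mem_patternV (sub_one_mem_patternV (inv_mem_patternU hΦ hcl hu)),
      translate u⁻¹]
  · rintro ⟨X, rfl⟩
    have hu := one_add_mem_patternU hΦ (projJ_mem_patternV (J := J) X)
    refine ⟨(1 + projJ J X)⁻¹, inv_mem_patternU hΦ hcl hu, ?_⟩
    change A + projJ J ((projJ J X)ᵀ * A) = projJ J (((1 + projJ J X)⁻¹⁻¹)ᵀ * A)
    rw [nonsing_inv_nonsing_inv _ (isUnit_det_of_mem_patternU hΦ hu),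
      translate (1 + projJ J X), add_sub_cancel_left]

theorem ncard_orbR_eq_ncard_orbL : (orbR J A).ncard = (orbL J A).ncard := by
  have hrank := LinearMap.BilinForm.finrank_range_eq_of_isAdjointPair dpairForm_nondegenerate
    (isAdjointPair_orbRMap_orbLMap J A)
  rw [orbR_eq_range hΦ hcl hA, orbL_eq_range hΦ hcl hA, Set.range_comp' (A + ·),
    Set.range_comp' (A + ·), Set.ncard_image_of_injective _ (add_right_injective A),
    Set.ncard_image_of_injective _ (add_right_injective A), ← LinearMap.coe_range,
    ← LinearMap.coe_range, ← Nat.card_coe_set_eq, ← Nat.card_coe_set_eq]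
  exact Nat.card_congr (LinearEquiv.ofFinrankEq _ _ hrank).toEquiv

end OrbitSize

section Counting

variable {F : Type} [Field F] {n : ℕ}

def numOrbRInBi (J : Set (Fin n × Fin n)) (A : Matrix (Fin n) (Fin n) F) : ℕ :=
  Nat.card (Quot fun B C : orbBi J A =>
    ∃ u ∈ patternU J, actR J u (B : Matrix (Fin n) (Fin n) F) = C)

def numOrbLInBi (J : Set (Fin n × Fin n)) (A : Matrix (Fin n) (Fin n) F) : ℕ :=
  Nat.card (Quot fun B C : orbBi J A =>
    ∃ u ∈ patternU J, actL J u (B : Matrix (Fin n) (Fin n) F) = C)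

variable [Fintype F] {J : Set (Fin n × Fin n)} (hΦ : ∀ p ∈ J, p.1 < p.2)
  (hcl : ∀ i j k : Fin n, (i, j) ∈ J → (j, k) ∈ J → (i, k) ∈ J)
  {A : Matrix (Fin n) (Fin n) F}
include hΦ hcl

theorem finsum_orbBi_eq_numOrbRInBi_smul {M : Type*} [AddCommMonoid M]
    (f : Matrix (Fin n) (Fin n) F → M)
    (hf : ∀ u ∈ patternU J,
      ∑ᶠ B ∈ orbR J (actL J u A), f B = ∑ᶠ B ∈ orbR J A, f B) :
    ∑ᶠ B ∈ orbBi J A, f B = numOrbRInBi J A • ∑ᶠ B ∈ orbR J A, f B := by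
  have hrel : (fun B C : orbBi J A =>
      ∃ u ∈ patternU J, actR J u (B : Matrix (Fin n) (Fin n) F) = C) =
      fun B C : orbBi J A => (C : Matrix (Fin n) (Fin n) F) ∈ orbR J B := by
    ext B C
    exact exists_congr fun u => and_congr_right' eq_comm
  rw [numOrbRInBi, hrel]
  refine finsum_mem_eq_card_quot_smul (Set.toFinite _) (orbR J)
    (fun B hB => mem_orbR_self (orbBi_subset_patternV A hB)) ?_
    (fun B hB => orbR_subset_orbBi hΦ hcl hB) f _ ?_
  · rintro B hB _ ⟨w, hw, rfl⟩
    exact orbR_actR hΦ hcl hw (orbBi_subset_patternV A hB)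
  · rintro _ ⟨u, hu, v, hv, rfl⟩
    change ∑ᶠ B ∈ orbR J (actL J u (actR J v A)), f B = _
    rw [actL_actR_comm hΦ hcl hu hv,
      orbR_actR hΦ hcl hv (B := actL J u A) (projJ_mem_patternV _), hf u hu]

theorem ncard_orbBi_eq_numOrbLInBi_mul_ncard_orbL :
    (orbBi J A).ncard = numOrbLInBi J A * (orbL J A).ncard := by
  have hrel : (fun B C : orbBi J A =>
      ∃ u ∈ patternU J, actL J u (B : Matrix (Fin n) (Fin n) F) = C) =
      fun B C : orbBi J A => (C : Matrix (Fin n) (Fin n) F) ∈ orbL J B := by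
    ext B C
    exact exists_congr fun u => and_congr_right' eq_comm
  rw [numOrbLInBi, hrel, ← smul_eq_mul, ← finsum_one]
  refine finsum_mem_eq_card_quot_smul (Set.toFinite _) (orbL J)
    (fun B hB => mem_orbL_self (orbBi_subset_patternV A hB)) ?_
    (fun B hB => orbL_subset_orbBi hΦ hcl hB) _ _ ?_
  · rintro B hB _ ⟨w, hw, rfl⟩
    exact orbL_actL hΦ hcl hw (orbBi_subset_patternV A hB)
  · rintro _ ⟨u, hu, v, hv, rfl⟩
    change ∑ᶠ B ∈ orbL J (actL J u (actR J v A)), 1 = _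
    rw [orbL_actL hΦ hcl hu (B := actR J v A) (projJ_mem_patternV _), orbL_actR hΦ hcl hv,
      finsum_one, ((actR_injOn hΦ hcl hv).mono (orbL_subset_patternV A)).ncard_image]

theorem ncard_orbBi_eq_numOrbRInBi_mul_ncard_orbR :
    (orbBi J A).ncard = numOrbRInBi J A * (orbR J A).ncard := by
  have := finsum_orbBi_eq_numOrbRInBi_smul hΦ hcl (A := A) (fun _ => (1 : ℕ)) fun u hu => by
    rw [finsum_one, finsum_one, orbR_actL hΦ hcl hu,
      ((actL_injOn hΦ hcl hu).mono (orbR_subset_patternV A)).ncard_image]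
  rwa [finsum_one, finsum_one, smul_eq_mul] at this

theorem ncard_orbL_eq_numOrbRInBi_mul_ncard_inter (hA : A ∈ patternV J) :
    (orbL J A).ncard = numOrbRInBi J A * (orbR J A ∩ orbL J A).ncard := by
  have := finsum_orbBi_eq_numOrbRInBi_smul hΦ hcl ((orbL J A).indicator 1) fun u hu => by
    have hinj := actL_injOn hΦ hcl hu
    have hinter : actL J u '' orbR J A ∩ orbL J A = actL J u '' (orbR J A ∩ orbL J A) := by
      rw [hinj.image_inter (orbR_subset_patternV A) (orbL_subset_patternV A),
        actL_image_orbL hΦ hcl hu]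
    rw [finsum_mem_indicator_one, finsum_mem_indicator_one, orbR_actL hΦ hcl hu, hinter,
      (hinj.mono fun _ hB => orbR_subset_patternV A hB.1).ncard_image]
  rwa [finsum_mem_indicator_one, finsum_mem_indicator_one, smul_eq_mul,
    Set.inter_eq_right.2 (orbL_subset_orbBi hΦ hcl (mem_orbBi_self hA))] at this

theorem actR_actL_eq_self_iff {u g : Matrix (Fin n) (Fin n) F} (hu : u ∈ patternU J)
    (hg : g ∈ patternU J) {B : Matrix (Fin n) (Fin n) F} (hB : B ∈ patternV J) :
    actR J g (actL J u B) = actL J u B ↔ actR J g B = B := by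
  rw [← actL_actR_comm hΦ hcl hu hg]
  exact (actL_injOn hΦ hcl hu).eq_iff (projJ_mem_patternV _) hB

/-- `B.g = B` means `π_J(B (g⁻¹ - 1)ᵀ) = 0`, which kills the term `π_J((u⁻¹ - 1)ᵀ B)`
of `u.B` in the pairing with `g⁻¹ - 1`. -/
theorem dpair_actL_of_actR_eq_self {u g : Matrix (Fin n) (Fin n) F} (hu : u ∈ patternU J)
    (hg : g ∈ patternU J) {B : Matrix (Fin n) (Fin n) F} (hB : B ∈ patternV J)
    (hfix : actR J g B = B) : dpair (actL J u B) (g⁻¹ - 1) = dpair B (g⁻¹ - 1) := by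
  have hD := sub_one_mem_patternV (inv_mem_patternU hΦ hcl hg)
  have hw := sub_one_mem_patternV (inv_mem_patternU hΦ hcl hu)
  have hBD : projJ J (B * (g⁻¹ - 1)ᵀ) = 0 := by
    rw [transpose_sub, transpose_one, Matrix.mul_sub, Matrix.mul_one, projJ_sub]
    change actR J g B - projJ J B = 0
    rw [hfix, projJ_of_mem_patternV hB, sub_self]
  have hsplit : (u⁻¹)ᵀ * B = B + (u⁻¹ - 1)ᵀ * B := by
    rw [transpose_sub, transpose_one, Matrix.sub_mul, Matrix.one_mul, add_sub_cancel]
  rw [actL, dpair_projJ_of_mem_patternV hD, hsplit, dpair_add_left,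
    dpair_comm ((u⁻¹ - 1)ᵀ * B), ← dpair_mul_transpose, ← dpair_projJ_of_mem_patternV hw,
    hBD, dpair_zero_left, add_zero]

theorem bcharFn_eq_numOrbRInBi_mul_rcharFn (θ : AddChar F ℂ) {g : Matrix (Fin n) (Fin n) F}
    (hg : g ∈ patternU J) : bcharFn J θ A g = numOrbRInBi J A * rcharFn J θ A g := by
  have := finsum_orbBi_eq_numOrbRInBi_smul hΦ hcl
    (fun B => if actR J g B = B then θ (dpair B (g⁻¹ - 1)) else 0) fun u hu => by
      rw [orbR_actL hΦ hcl hu,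
        finsum_mem_image ((actL_injOn hΦ hcl hu).mono (orbR_subset_patternV A))]
      refine finsum_mem_congr rfl fun B hB => ?_
      have hBV := orbR_subset_patternV A hB
      simp only [actR_actL_eq_self_iff hΦ hcl hu hg hBV]
      split_ifs with hfix
      · rw [dpair_actL_of_actR_eq_self hΦ hcl hu hg hBV hfix]
      · rfl
  rw [bcharFn, rcharFn, ← nsmul_eq_mul]
  exact this

end Counting

theorem stmt_13_general {F : Type} [Field F] [Fintype F] {n : ℕ}
    (J : Set (Fin n × Fin n))
    (hΦ : ∀ p ∈ J, p.1 < p.2)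
    (hcl : ∀ i j k : Fin n, (i, j) ∈ J → (j, k) ∈ J → (i, k) ∈ J)
    (θ : AddChar F ℂ)
    (A : Matrix (Fin n) (Fin n) F) (hA : A ∈ patternV J) :
    Nat.card ↥(orbR J A) = Nat.card ↥(orbL J A) ∧
    Nat.card (Quot (fun B C : ↥(orbBi J A) =>
        ∃ u ∈ patternU J,
          projJ J ((B : Matrix (Fin n) (Fin n) F) * (u⁻¹)ᵀ) = (C : Matrix (Fin n) (Fin n) F))) =
      Nat.card (Quot (fun B C : ↥(orbBi J A) =>
        ∃ u ∈ patternU J,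
          projJ J ((u⁻¹)ᵀ * (B : Matrix (Fin n) (Fin n) F)) = (C : Matrix (Fin n) (Fin n) F))) ∧
    (∃ κ : ℕ,
        (∀ g ∈ patternU J, bcharFn J θ A g = (κ : ℂ) * rcharFn J θ A g) ∧
        κ * Nat.card ↥(orbR J A ∩ orbL J A) = Nat.card ↥(orbR J A)) ∧
    Nat.card ↥(orbBi J A) * Nat.card ↥(orbR J A ∩ orbL J A) =
        Nat.card ↥(orbR J A) * Nat.card ↥(orbL J A) ∧
    Nat.card ↥(orbBi J A) * Nat.card ↥(orbR J A ∩ orbL J A) =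
        Nat.card ↥(orbR J A) * Nat.card ↥(orbR J A) := by
  have hrl := ncard_orbR_eq_ncard_orbL hΦ hcl hA
  have hbr := ncard_orbBi_eq_numOrbRInBi_mul_ncard_orbR hΦ hcl (A := A)
  have hbl := ncard_orbBi_eq_numOrbLInBi_mul_ncard_orbL hΦ hcl (A := A)
  have hli := ncard_orbL_eq_numOrbRInBi_mul_ncard_inter hΦ hcl hA
  have hr_pos : 0 < (orbR J A).ncard :=
    (Set.ncard_pos (Set.toFinite _)).2 ⟨A, mem_orbR_self hA⟩
  have hκ : numOrbRInBi J A = numOrbLInBi J A :=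
    Nat.eq_of_mul_eq_mul_right hr_pos (by rw [← hbr, hbl, hrl])
  simp only [Nat.card_coe_set_eq]
  refine ⟨hrl, hκ, ⟨numOrbRInBi J A,
    fun g hg => bcharFn_eq_numOrbRInBi_mul_rcharFn hΦ hcl θ hg, ?_⟩, ?_, ?_⟩
  · rw [hrl, hli]
  · rw [hbr, hli]
    ring
  · rw [hbr, hrl, hli]
    ring

/-- For J ⊆ Φ⁺ closed and A ∈ V_J: |O_A^r| = |O_A^l|; the numbers of right
and of left U_J-orbits contained in O_A^bi coincide; there exists κ ∈ ℕ with
ℂO_A^bi ≅ (ℂO_A^r)^{⊕κ} as right ℂU_J-modules (expressed on characters) and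
κ·|O_A^r ∩ O_A^l| = |O_A^r|; and |O_A^bi|·|O_A^r ∩ O_A^l| = |O_A^r|·|O_A^l| = |O_A^r|². -/
theorem stmt_13 {F : Type} [Field F] [Fintype F] {n : ℕ}
    (J : Set (Fin n × Fin n))
    (hΦ : ∀ p ∈ J, p.1 < p.2)
    (hcl : ∀ i j k : Fin n, (i, j) ∈ J → (j, k) ∈ J → (i, k) ∈ J)
    (θ : AddChar F ℂ) (hθ : θ ≠ 1)
    (A : Matrix (Fin n) (Fin n) F) (hA : A ∈ patternV J) :
    Nat.card ↥(orbR J A) = Nat.card ↥(orbL J A) ∧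
    Nat.card (Quot (fun B C : ↥(orbBi J A) =>
        ∃ u ∈ patternU J,
          projJ J ((B : Matrix (Fin n) (Fin n) F) * (u⁻¹)ᵀ) = (C : Matrix (Fin n) (Fin n) F))) =
      Nat.card (Quot (fun B C : ↥(orbBi J A) =>
        ∃ u ∈ patternU J,
          projJ J ((u⁻¹)ᵀ * (B : Matrix (Fin n) (Fin n) F)) = (C : Matrix (Fin n) (Fin n) F))) ∧
    (∃ κ : ℕ,
        (∀ g ∈ patternU J, bcharFn J θ A g = (κ : ℂ) * rcharFn J θ A g) ∧
        κ * Nat.card ↥(orbR J A ∩ orbL J A) = Nat.card ↥(orbR J A)) ∧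
    Nat.card ↥(orbBi J A) * Nat.card ↥(orbR J A ∩ orbL J A) =
        Nat.card ↥(orbR J A) * Nat.card ↥(orbL J A) ∧
    Nat.card ↥(orbBi J A) * Nat.card ↥(orbR J A ∩ orbL J A) =
        Nat.card ↥(orbR J A) * Nat.card ↥(orbR J A) :=
  stmt_13_general J hΦ hcl θ A hA
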